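/- arXiv:1712.08817 — 2 statements merged into one kernel-verified Lean document; each statement's English description precedes it below -/
import Mathlib

section
/- Let A ∈ ℝ^{Q×Q} be a left-stochastic primitive matrix with Perron vector r (Ar = r, 1ᵀr = 1, r > 0 entrywise), and let R = diag(r). If A is locally balanced, i.e., RAᵀ = AR, then the matrix R − RAᵀ is symmetric and positive semi-definite. -/
/-!
With `D = diagonal √r`, the balance condition makes `S = D Aᵀ D⁻¹` symmetric, and
`R - R Aᵀ = D (1 - S) D`, so it suffices to show `S ≤ 1` in the Loewner order. The entries of `A`
may be negative, but those of a power `B = A ^ k` are positive; then `R Bᵀ` is a symmetric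
nonnegative matrix with row sums `r`, so `R - R Bᵀ` is a weighted graph Laplacian, hence positive
semidefinite, which says `S ^ k ≤ 1`. For self-adjoint `S` the spectral mapping theorem turns
`S ^ k ≤ 1` into `S ≤ 1`.
-/

open Matrix

theorem IsSelfAdjoint.le_one_of_pow_le_one {A : Type*} [Ring A] [StarRing A] [PartialOrder A]
    [StarOrderedRing A] [Algebra ℝ A] [TopologicalSpace A]
    [ContinuousFunctionalCalculus ℝ A IsSelfAdjoint] [NonnegSpectrumClass ℝ A] {a : A}
    (ha : IsSelfAdjoint a) {k : ℕ} (hk : k ≠ 0) (h : a ^ k ≤ 1) : a ≤ 1 := by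
  rw [CFC.le_one_iff (R := ℝ) a]
  intro x hx
  have hxk : x ^ k ≤ 1 :=
    (CFC.le_one_iff (R := ℝ) (a ^ k) (ha.pow k)).mp h _ (spectrum.pow_mem_pow a k hx)
  by_contra! hx1
  exact (one_lt_pow₀ hx1 hk).not_ge hxk

namespace Matrix

variable {n : Type*} [Fintype n] [DecidableEq n]

theorem vecMul_pow_of_vecMul_eq {R : Type*} [Semiring R] {A : Matrix n n R} {v : n → R}
    (h : v ᵥ* A = v) (k : ℕ) : v ᵥ* A ^ k = v := by
  induction k with
  | zero => simp
  | succ k ih => rw [pow_succ, ← vecMul_vecMul, ih, h]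

theorem sum_pow_apply_eq_one {R : Type*} [Semiring R] {A : Matrix n n R}
    (h : ∀ j, ∑ i, A i j = 1) (k : ℕ) (j : n) : ∑ i, (A ^ k) i j = 1 := by
  have hA : (1 : n → R) ᵥ* A = 1 := funext fun j => by simp [vecMul, dotProduct, h]
  simpa [vecMul, dotProduct] using congrFun (vecMul_pow_of_vecMul_eq hA k) j

theorem posSemidef_diagonal_sum_sub {w : Matrix n n ℝ} (hw : w.IsSymm)
    (hnonneg : ∀ i j, 0 ≤ w i j) :
    (diagonal (fun i => ∑ j, w i j) - w).PosSemidef := by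
  refine PosSemidef.of_dotProduct_mulVec_nonneg ?_ fun x => ?_
  · simp only [IsHermitian, conjTranspose_eq_transpose_of_trivial, transpose_sub,
      diagonal_transpose, hw.eq]
  have hform : star x ⬝ᵥ ((diagonal (fun i => ∑ j, w i j) - w) *ᵥ x)
      = ∑ i, ∑ j, w i j * (x i ^ 2 - x i * x j) := by
    rw [star_trivial, sub_mulVec, dotProduct_sub]
    simp only [dotProduct, mulVec_diagonal]
    simp only [mulVec, dotProduct, Finset.sum_mul, Finset.mul_sum, ← Finset.sum_sub_distrib]
    exact Finset.sum_congr rfl fun i _ => Finset.sum_congr rfl fun j _ => by ring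
  -- symmetrizing the double sum turns each summand into `w i j * (x i - x j) ^ 2 / 2`
  have hsymm : ∑ i, ∑ j, w i j * (x i ^ 2 - x i * x j)
      = ∑ i, ∑ j, w i j * (x j ^ 2 - x j * x i) := by
    rw [Finset.sum_comm]
    exact Finset.sum_congr rfl fun i _ => Finset.sum_congr rfl fun j _ => by rw [hw.apply i j]
  have hsplit : ∑ i, ∑ j, w i j * (x i - x j) ^ 2
      = ∑ i, ∑ j, w i j * (x i ^ 2 - x i * x j) + ∑ i, ∑ j, w i j * (x j ^ 2 - x j * x i) := by
    rw [← Finset.sum_add_distrib]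
    exact Finset.sum_congr rfl fun i _ => by
      rw [← Finset.sum_add_distrib]
      exact Finset.sum_congr rfl fun j _ => by ring
  have hsq : 0 ≤ ∑ i, ∑ j, w i j * (x i - x j) ^ 2 :=
    Finset.sum_nonneg fun i _ => Finset.sum_nonneg fun j _ =>
      mul_nonneg (hnonneg i j) (sq_nonneg _)
  rw [hform]
  linarith

theorem posSemidef_diagonal_sub_diagonal_mul_transpose {B : Matrix n n ℝ} {r : n → ℝ}
    (hr : ∀ i, 0 ≤ r i) (hB : ∀ i j, 0 ≤ B i j) (hcol : ∀ j, ∑ i, B i j = 1)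
    (hbal : diagonal r * Bᵀ = B * diagonal r) :
    (diagonal r - diagonal r * Bᵀ).PosSemidef := by
  have hrow : (fun i => ∑ j, (diagonal r * Bᵀ) i j) = r := funext fun i => by
    simp only [diagonal_mul, transpose_apply, ← Finset.mul_sum, hcol, mul_one]
  have hsymm : (diagonal r * Bᵀ).IsSymm := by
    rw [IsSymm, transpose_mul, transpose_transpose, diagonal_transpose, hbal]
  simpa only [hrow] using posSemidef_diagonal_sum_sub hsymm fun i j => by
    simpa only [diagonal_mul, transpose_apply] using mul_nonneg (hr i) (hB j i)

open scoped MatrixOrder in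
theorem posSemidef_diagonal_sub_diagonal_mul_transpose_of_pow {A : Matrix n n ℝ} {r : n → ℝ}
    (hr : ∀ i, 0 < r i) (hbal : diagonal r * Aᵀ = A * diagonal r) {k : ℕ} (hk : k ≠ 0)
    (h : (diagonal r - diagonal r * Aᵀ ^ k).PosSemidef) :
    (diagonal r - diagonal r * Aᵀ).PosSemidef := by
  set D := diagonal fun i => √(r i)
  set E := diagonal fun i => (√(r i))⁻¹
  have hsqrt : ∀ i, √(r i) ≠ 0 := fun i => (Real.sqrt_pos.mpr (hr i)).ne'
  have hDD : D * D = diagonal r := by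
    rw [diagonal_mul_diagonal]; simp only [Real.mul_self_sqrt (hr _).le]
  have hED : E * D = 1 := by
    rw [diagonal_mul_diagonal, ← diagonal_one]; simp only [inv_mul_cancel₀ (hsqrt _)]
  have hER : E * diagonal r = D := by
    rw [← hDD, ← mul_assoc, hED, one_mul]
  have hDstar : star D = D := by rw [star_eq_conjTranspose, diagonal_conjTranspose, star_trivial]
  have hEstar : star E = E := by rw [star_eq_conjTranspose, diagonal_conjTranspose, star_trivial]
  -- `S = D Aᵀ D⁻¹` is similar to `Aᵀ`, and symmetric because `diagonal r * Aᵀ` is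
  set S := E * (diagonal r * Aᵀ) * E
  have hS : IsSelfAdjoint S := by
    rw [IsSelfAdjoint, star_mul, star_mul, hEstar, star_eq_conjTranspose (_ * _),
      conjTranspose_eq_transpose_of_trivial, transpose_mul, diagonal_transpose,
      transpose_transpose, ← hbal, ← mul_assoc]
  have hsemiconj : SemiconjBy D Aᵀ S := by
    rw [SemiconjBy, mul_assoc, hED, mul_one, ← mul_assoc, hER]
  have hcongr : ∀ m : ℕ, diagonal r - diagonal r * Aᵀ ^ m = D * (1 - S ^ m) * star D := by
    intro m
    rw [hDstar, mul_sub, sub_mul, mul_one, hDD, ← hDD, mul_assoc D, (hsemiconj.pow_right m).eq,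
      mul_assoc]
  have hD : IsUnit D := isUnit_diagonal.mpr (Pi.isUnit_iff.mpr fun i => (hsqrt i).isUnit)
  rw [hcongr, hD.posSemidef_star_right_conjugate_iff] at h
  rw [← pow_one Aᵀ, hcongr, hD.posSemidef_star_right_conjugate_iff, pow_one, ← le_iff]
  exact hS.le_one_of_pow_le_one hk (le_iff.mpr h)

end Matrix

theorem stmt_1_general (Q : ℕ) (A : Matrix (Fin Q) (Fin Q) ℝ)
    (hls : ∀ j, ∑ i, A i j = 1)
    (hprim : ∃ j0 : ℕ, 1 ≤ j0 ∧ ∀ i j, 0 < (A ^ j0) i j)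
    (r : Fin Q → ℝ)
    (hpos : ∀ i, 0 < r i)
    (hbal : Matrix.diagonal r * Aᵀ = A * Matrix.diagonal r) :
    (Matrix.diagonal r - Matrix.diagonal r * Aᵀ).PosSemidef := by
  obtain ⟨k, hk, hAk⟩ := hprim
  refine posSemidef_diagonal_sub_diagonal_mul_transpose_of_pow hpos hbal
    (Nat.one_le_iff_ne_zero.mp hk) ?_
  rw [← transpose_pow]
  refine posSemidef_diagonal_sub_diagonal_mul_transpose (fun i => (hpos i).le)
    (fun i j => (hAk i j).le) (sum_pow_apply_eq_one hls k) ?_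
  rw [transpose_pow]
  exact SemiconjBy.pow_right hbal k

theorem stmt_1 (Q : ℕ) (A : Matrix (Fin Q) (Fin Q) ℝ)
    (hls : ∀ j, ∑ i, A i j = 1)
    (hprim : ∃ j0 : ℕ, 1 ≤ j0 ∧ ∀ i j, 0 < (A ^ j0) i j)
    (r : Fin Q → ℝ) (hAr : A.mulVec r = r) (hsum : ∑ i, r i = 1)
    (hpos : ∀ i, 0 < r i)
    (hbal : Matrix.diagonal r * Aᵀ = A * Matrix.diagonal r) :
    (Matrix.diagonal r - Matrix.diagonal r * Aᵀ).PosSemidef :=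
  stmt_1_general Q A hls hprim r hpos hbal
end

section
/- Let A ∈ ℝ^{Q×Q} be a left-stochastic primitive locally balanced matrix with Perron vector r and R = diag(r). Then a vector x ∈ ℝ^Q satisfies (R − RAᵀ)x = 0 if and only if all entries of x are equal, i.e., x is a scalar multiple of the all-ones vector. -/
open Matrix

theorem stmt_2 (Q : ℕ) (A : Matrix (Fin Q) (Fin Q) ℝ)
    (hls : ∀ j, ∑ i, A i j = 1)
    (hprim : ∃ j0 : ℕ, 1 ≤ j0 ∧ ∀ i j, 0 < (A ^ j0) i j)
    (r : Fin Q → ℝ) (hAr : A.mulVec r = r) (hsum : ∑ i, r i = 1)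
    (hpos : ∀ i, 0 < r i)
    (hbal : Matrix.diagonal r * Aᵀ = A * Matrix.diagonal r)
    (x : Fin Q → ℝ) :
    (Matrix.diagonal r - Matrix.diagonal r * Aᵀ).mulVec x = 0 ↔
      ∃ c : ℝ, ∀ i, x i = c := by
  have hRv : ∀ v : Fin Q → ℝ, (Matrix.diagonal r).mulVec v = fun i => r i * v i := by
    intro v; funext i
    simp [Matrix.mulVec, Matrix.diagonal, dotProduct, Finset.sum_ite_eq]
  have hrn : ∀ n : ℕ, (A ^ n).mulVec r = r := by
    intro n
    induction n with
    | zero => simp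
    | succ n ih =>
      rw [pow_succ', ← Matrix.mulVec_mulVec, ih, hAr]
  constructor
  · intro h
    set y : Fin Q → ℝ := fun i => r i * x i with hy
    have hAy : A.mulVec y = y := by
      have h1 : (Matrix.diagonal r).mulVec x = (Matrix.diagonal r * Aᵀ).mulVec x := by
        rw [Matrix.sub_mulVec] at h
        exact sub_eq_zero.mp h
      rw [hbal, ← Matrix.mulVec_mulVec, hRv x] at h1
      exact h1.symm
    have hyn : ∀ n : ℕ, (A ^ n).mulVec y = y := by
      intro n
      induction n with
      | zero => simp
      | succ n ih =>
        rw [pow_succ', ← Matrix.mulVec_mulVec, ih, hAy]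
    obtain ⟨j0, hj0, hApos⟩ := hprim
    rcases Nat.eq_zero_or_pos Q with hQ | hQ
    · exact ⟨0, fun i => absurd i.isLt (by omega)⟩
    have : Nonempty (Fin Q) := ⟨⟨0, hQ⟩⟩
    obtain ⟨i0, hi0⟩ := Finite.exists_max x
    refine ⟨x i0, fun j => ?_⟩
    by_contra hne
    have hlt : x j < x i0 := lt_of_le_of_ne (hi0 j) hne
    have hey : ∑ k, (A ^ j0) i0 k * (r k * x k) = r i0 * x i0 := by
      have := congrFun (hyn j0) i0
      simpa [Matrix.mulVec, dotProduct, hy] using this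
    have her : ∑ k, (A ^ j0) i0 k * r k = r i0 := by
      have := congrFun (hrn j0) i0
      simpa [Matrix.mulVec, dotProduct] using this
    have hstrict : ∑ k, (A ^ j0) i0 k * (r k * x k) < ∑ k, (A ^ j0) i0 k * (r k * x i0) := by
      apply Finset.sum_lt_sum
      · intro k _
        have hw : 0 < (A ^ j0) i0 k * r k := mul_pos (hApos i0 k) (hpos k)
        have := mul_le_mul_of_nonneg_left (hi0 k) hw.le
        nlinarith
      · exact ⟨j, Finset.mem_univ j, by nlinarith [mul_pos (hApos i0 j) (hpos j)]⟩
    rw [hey] at hstrict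
    have : ∑ k, (A ^ j0) i0 k * (r k * x i0) = r i0 * x i0 := by
      rw [← her, Finset.sum_mul]
      apply Finset.sum_congr rfl
      intro k _; ring
    rw [this] at hstrict
    exact lt_irrefl _ hstrict
  · rintro ⟨c, hc⟩
    have hx : x = fun _ => c := funext hc
    rw [Matrix.sub_mulVec, hbal, ← Matrix.mulVec_mulVec, hRv x]
    have : (fun i => r i * x i) = c • r := by
      funext i; simp [hc i, mul_comm]
    rw [this]
    rw [Matrix.mulVec_smul, hAr]
    simp
end
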